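/- There do not exist Newman polynomials p and q such that p(3) = 64·q(3), q(X) divides p(X) in ℤ[X], the coefficient of X in q equals 1, and the coefficient of X^3 in q equals 1. (In the language of the multiplication-transducer algorithm, any representation of 64 that steps up upon first arriving at the carry value 9 is a local representation.) -/
import Mathlib


open Polynomial

/-- A Newman polynomial: all coefficients in {0,1} and constant coefficient 1. -/
def IsNewman (p : Polynomial ℤ) : Prop :=
  (∀ i, p.coeff i = 0 ∨ p.coeff i = 1) ∧ p.coeff 0 = 1

lemma newman_ne_zero {p : Polynomial ℤ} (hp : IsNewman p) : p ≠ 0 := by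
  intro h
  have := hp.2
  rw [h] at this
  simp at this

lemma newman_lc {p : Polynomial ℤ} (hp : IsNewman p) : p.coeff p.natDegree = 1 := by
  rcases hp.1 p.natDegree with h | h
  · exact absurd h (leadingCoeff_ne_zero.mpr (newman_ne_zero hp))
  · exact h

lemma newman_eval_lb {p : Polynomial ℤ} (hp : IsNewman p) :
    (3 : ℤ) ^ p.natDegree ≤ p.eval 3 := by
  rw [eval_eq_sum_range]
  calc (3 : ℤ) ^ p.natDegree = p.coeff p.natDegree * 3 ^ p.natDegree := by
        rw [newman_lc hp]; ring
  _ ≤ ∑ i ∈ Finset.range (p.natDegree + 1), p.coeff i * 3 ^ i := by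
      refine Finset.single_le_sum (f := fun i => p.coeff i * 3 ^ i) ?_
        (Finset.self_mem_range_succ _)
      intro i _
      rcases hp.1 i with h | h <;> simp [h]

lemma newman_eval_ub {p : Polynomial ℤ} (hp : IsNewman p) :
    2 * p.eval 3 ≤ 3 ^ (p.natDegree + 1) - 1 := by
  have h1 : p.eval 3 ≤ ∑ i ∈ Finset.range (p.natDegree + 1), (3 : ℤ) ^ i := by
    rw [eval_eq_sum_range]
    refine Finset.sum_le_sum ?_
    intro i _
    rcases hp.1 i with h | h <;> rw [h] <;> simp
  have h2 : (∑ i ∈ Finset.range (p.natDegree + 1), (3 : ℤ) ^ i) * (3 - 1) =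
      3 ^ (p.natDegree + 1) - 1 := geom_sum_mul 3 (p.natDegree + 1)
  linarith

theorem stmt_15 :
    ¬ ∃ p q : Polynomial ℤ, IsNewman p ∧ IsNewman q ∧
      p.eval 3 = 64 * q.eval 3 ∧ q ∣ p ∧ q.coeff 1 = 1 ∧ q.coeff 3 = 1 := by
  rintro ⟨p, q, hp, hq, heval, ⟨r, hpr⟩, hq1, hq3⟩
  have hq0 : q.coeff 0 = 1 := hq.2
  have hpne : p ≠ 0 := newman_ne_zero hp
  have hqne : q ≠ 0 := newman_ne_zero hq
  -- constant coefficient of r is 1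
  have hr0 : r.coeff 0 = 1 := by
    have h := hp.2
    rw [hpr, mul_coeff_zero, hq0, one_mul] at h
    exact h
  have hrne : r ≠ 0 := by
    intro h; rw [h] at hr0; simp at hr0
  -- degrees
  have hdeg : p.natDegree = q.natDegree + r.natDegree := by
    rw [hpr, natDegree_mul hqne hrne]
  -- evaluation of r at 3
  have hq3pos : 0 < q.eval 3 := lt_of_lt_of_le (by positivity) (newman_eval_lb hq)
  have hre : r.eval 3 = 64 := by
    have h : q.eval 3 * r.eval 3 = q.eval 3 * 64 := by
      rw [← eval_mul, ← hpr, heval]; ring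
    exact mul_left_cancel₀ (ne_of_gt hq3pos) h
  -- r has degree 4
  have hdr : r.natDegree = 4 := by
    have hA := newman_eval_lb hp
    have hB := newman_eval_ub hq
    have hA' := newman_eval_lb hq
    have hB' := newman_eval_ub hp
    rw [hdeg, heval] at hA hB'
    have hsplit : (3 : ℤ) ^ (q.natDegree + r.natDegree)
        = 3 ^ q.natDegree * 3 ^ r.natDegree := pow_add 3 _ _
    have hsplit' : (3 : ℤ) ^ (q.natDegree + r.natDegree + 1)
        = 3 ^ q.natDegree * 3 ^ r.natDegree * 3 := by rw [pow_succ, hsplit]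
    rw [hsplit] at hA
    rw [hsplit'] at hB'
    have h3dq : (0 : ℤ) < 3 ^ q.natDegree := by positivity
    have hq3' : 2 * q.eval 3 ≤ 3 * 3 ^ q.natDegree - 1 := by
      rw [pow_succ] at hB; linarith
    -- upper bound: 3 ^ r.natDegree < 96
    have hub : (3 : ℤ) ^ r.natDegree < 96 := by
      by_contra hcon
      push_neg at hcon
      nlinarith [mul_le_mul_of_nonneg_left hcon (le_of_lt h3dq)]
    -- lower bound: 42 < 3 ^ r.natDegree
    have hlb : (42 : ℤ) < 3 ^ r.natDegree := by
      by_contra hcon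
      push_neg at hcon
      nlinarith [mul_le_mul_of_nonneg_left hcon (le_of_lt h3dq)]
    by_contra hne4
    rcases lt_or_gt_of_ne hne4 with h | h
    · have : (3 : ℤ) ^ r.natDegree ≤ 3 ^ 3 :=
        pow_le_pow_right₀ (by norm_num) (by omega)
      norm_num at this
      linarith
    · have : (3 : ℤ) ^ 5 ≤ 3 ^ r.natDegree :=
        pow_le_pow_right₀ (by norm_num) (by omega)
      norm_num at this
      linarith
  -- leading coefficient of r is 1
  have hr4 : r.coeff 4 = 1 := by
    have h : p.leadingCoeff = q.leadingCoeff * r.leadingCoeff := by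
      rw [hpr, leadingCoeff_mul]
    rw [leadingCoeff, leadingCoeff, leadingCoeff, newman_lc hp, newman_lc hq,
      one_mul, hdr] at h
    exact h.symm
  have hr5 : r.coeff 5 = 0 := coeff_eq_zero_of_natDegree_lt (by rw [hdr]; omega)
  -- evaluation equation for the coefficients of r
  have hEval : r.coeff 0 + r.coeff 1 * 3 + r.coeff 2 * 9 + r.coeff 3 * 27
      + r.coeff 4 * 81 = 64 := by
    have h := hre
    rw [eval_eq_sum_range, hdr] at h
    simp [Finset.sum_range_succ] at h
    linarith
  -- coefficient equations for p = q * r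
  have hc1 : p.coeff 1 = q.coeff 0 * r.coeff 1 + q.coeff 1 * r.coeff 0 := by
    rw [hpr, coeff_mul]
    simp [Finset.Nat.sum_antidiagonal_eq_sum_range_succ_mk, Finset.sum_range_succ]
  have hc2 : p.coeff 2 = q.coeff 0 * r.coeff 2 + q.coeff 1 * r.coeff 1
      + q.coeff 2 * r.coeff 0 := by
    rw [hpr, coeff_mul]
    simp [Finset.Nat.sum_antidiagonal_eq_sum_range_succ_mk, Finset.sum_range_succ]
  have hc5 : p.coeff 5 = q.coeff 0 * r.coeff 5 + q.coeff 1 * r.coeff 4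
      + q.coeff 2 * r.coeff 3 + q.coeff 3 * r.coeff 2 + q.coeff 4 * r.coeff 1
      + q.coeff 5 * r.coeff 0 := by
    rw [hpr, coeff_mul]
    simp [Finset.Nat.sum_antidiagonal_eq_sum_range_succ_mk, Finset.sum_range_succ]
  simp only [hq0, hq1, hq3, hr0, hr4, hr5, one_mul, mul_one, mul_zero, zero_mul,
    add_zero, zero_add] at hc1 hc2 hc5
  have hp1 := hp.1 1
  have hp2 := hp.1 2
  have hp5 := hp.1 5
  have hqc2 := hq.1 2
  have hqc5 := hq.1 5
  rw [hr0, hr4] at hEval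
  -- r.coeff 1 = 0, r.coeff 2 = 1, r.coeff 3 = -1, q.coeff 2 = 0
  have ha : r.coeff 1 = 0 := by omega
  have hb : r.coeff 2 = 1 := by omega
  have hc : r.coeff 3 = -1 := by omega
  have hq2 : q.coeff 2 = 0 := by omega
  rw [ha, hb, hc, hq2] at hc5
  simp at hc5
  omega
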